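/- Let q be a prime power and let C ⊆ 𝔽_q^{n×m} be a rank-metric code of dimension k ≥ 1. Then for every integer r with 1 ≤ r ≤ k one has d(C) + r − 1 ≤ d_r(C) ≤ trk(C) − k + r. -/

import Mathlib

/-!
Both bounds come from one observation: if `C ≤ U ⊔ D` then `dim (C ⊓ U) ≥ dim C - dim D`, so
discarding `t` vectors from a finite spanning set of a space containing `C` loses at most `t`
dimensions of `C`. For the upper bound, discard `k - r` of the `trk(C)` rank-one matrices whose
span contains `C`. For the lower bound, take `U` spanned by rank-one matrices with
`dim (C ⊓ U) ≥ r`, choose a basis of `U` among them and discard `r - 1` basis vectors: the span of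
the remaining `dim U - r + 1` still meets `C` in a nonzero matrix, which is a sum of that many
rank-one matrices, so `d(C) ≤ dim U - r + 1`.
-/

open Matrix

/-- The minimum (rank) distance of a rank-metric code. -/
noncomputable def minRankDist {F : Type*} [Field F] {n m : ℕ}
    (C : Submodule F (Matrix (Fin n) (Fin m) F)) : ℕ :=
  sInf {r : ℕ | ∃ M ∈ C, M ≠ 0 ∧ M.rank = r}

/-- The tensor rank of a rank-metric code `C`: the least `R` such that `C` is
contained in the span of `R` rank-one matrices. -/
noncomputable def trkCode {F : Type*} [Field F] {n m : ℕ}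
    (C : Submodule F (Matrix (Fin n) (Fin m) F)) : ℕ :=
  sInf {R : ℕ | ∃ A : Fin R → Matrix (Fin n) (Fin m) F,
    (∀ r, (A r).rank = 1) ∧ C ≤ Submodule.span F (Set.range A)}

/-- The `r`-th generalized tensor rank of a rank-metric code `C`: the least dimension
of a subspace `U` spanned by rank-one matrices with `dim(C ⊓ U) ≥ r`. -/
noncomputable def genTensorRank {F : Type*} [Field F] {n m : ℕ}
    (C : Submodule F (Matrix (Fin n) (Fin m) F)) (r : ℕ) : ℕ :=
  sInf {s : ℕ | ∃ U : Submodule F (Matrix (Fin n) (Fin m) F),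
    (∃ S : Set (Matrix (Fin n) (Fin m) F), (∀ M ∈ S, M.rank = 1) ∧
      U = Submodule.span F S) ∧
    r ≤ Module.finrank F ↥(C ⊓ U) ∧ Module.finrank F ↥U = s}

open Module Submodule

section LinearAlgebra

variable {K V : Type*} [DivisionRing K] [AddCommGroup V] [Module K V] [FiniteDimensional K V]

theorem Submodule.finrank_le_finrank_inf_add_finrank {C U D : Submodule K V} (h : C ≤ U ⊔ D) :
    finrank K C ≤ finrank K ↥(C ⊓ U) + finrank K D := by
  have hdim := finrank_sup_add_finrank_inf_eq C U
  have hsup : finrank K ↥(C ⊔ U) ≤ finrank K ↥(U ⊔ D) := finrank_mono (sup_le h le_sup_left)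
  have hUD := finrank_add_le_finrank_add_finrank U D
  omega

theorem Submodule.exists_subset_finrank_le_finrank_inf_span_add [DecidableEq V]
    {C : Submodule K V} {S : Finset V} (hC : C ≤ span K S) {t : ℕ} (ht : t ≤ S.card) :
    ∃ T ⊆ S, T.card + t = S.card ∧ finrank K C ≤ finrank K ↥(C ⊓ span K T) + t := by
  obtain ⟨D, hDS, hDcard⟩ := Finset.exists_subset_card_eq ht
  refine ⟨S \ D, Finset.sdiff_subset, by rw [Finset.card_sdiff_of_subset hDS]; omega, ?_⟩
  have hsplit : span K (S : Set V) = span K ↑(S \ D) ⊔ span K ↑D := by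
    rw [← span_union, ← Finset.coe_union, Finset.sdiff_union_of_subset hDS]
  calc finrank K C ≤ finrank K ↥(C ⊓ span K ↑(S \ D)) + finrank K (span K (D : Set V)) :=
        finrank_le_finrank_inf_add_finrank (hsplit ▸ hC)
    _ ≤ finrank K ↥(C ⊓ span K ↑(S \ D)) + t := by
        gcongr; exact hDcard ▸ finrank_span_finset_le_card D

end LinearAlgebra

namespace Matrix

variable {F : Type*} [Field F] {m n : Type*} [Fintype n]

theorem rank_add_le (A B : Matrix m n F) : (A + B).rank ≤ A.rank + B.rank := by
  rw [rank, rank, rank, mulVecLin_add]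
  exact (finrank_mono (LinearMap.range_add_le _ _)).trans (finrank_add_le_finrank_add_finrank _ _)

theorem rank_smul_le [DecidableEq n] (c : F) (A : Matrix m n F) : (c • A).rank ≤ A.rank := by
  rw [smul_eq_mul_diagonal]
  exact rank_mul_le_left _ _

theorem rank_le_card_of_mem_span_finset [DecidableEq n] {S : Finset (Matrix m n F)}
    (hS : ∀ A ∈ S, A.rank ≤ 1) {M : Matrix m n F} (hM : M ∈ span F (S : Set (Matrix m n F))) :
    M.rank ≤ S.card := by
  obtain ⟨f, -, rfl⟩ := mem_span_finset.1 hM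
  calc (∑ A ∈ S, f A • A).rank ≤ ∑ A ∈ S, (f A • A).rank :=
        Finset.le_sum_of_subadditive rank (rank_zero (R := F)).le rank_add_le _ _
    _ ≤ ∑ _A ∈ S, 1 := Finset.sum_le_sum fun A hA => (rank_smul_le _ _).trans (hS A hA)
    _ = S.card := by simp

theorem rank_single_one [DecidableEq m] [DecidableEq n] (i : m) (j : n) :
    (single i j (1 : F)).rank = 1 := by
  refine le_antisymm ?_ (Nat.one_le_iff_ne_zero.2 fun h => ?_)
  · rw [single_eq_single_vecMulVec_single]
    exact rank_vecMulVec_le _ _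
  · have hzero : (single i j (1 : F)).mulVecLin = 0 :=
      LinearMap.range_eq_bot.1 (Submodule.finrank_eq_zero.1 h)
    have := congrFun (LinearMap.congr_fun hzero (Pi.single j 1)) i
    simp at this

end Matrix

section RankMetricCode

variable {F : Type*} [Field F] {n m : ℕ} {C : Submodule F (Matrix (Fin n) (Fin m) F)}

theorem minRankDist_le_rank {M : Matrix (Fin n) (Fin m) F} (hM : M ∈ C) (hM0 : M ≠ 0) :
    minRankDist C ≤ M.rank :=
  Nat.sInf_le ⟨M, hM, hM0, rfl⟩

theorem trkCode_spec (C : Submodule F (Matrix (Fin n) (Fin m) F)) :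
    ∃ A : Fin (trkCode C) → Matrix (Fin n) (Fin m) F,
      (∀ i, (A i).rank = 1) ∧ C ≤ span F (Set.range A) := by
  classical
  let b := (stdBasis F (Fin n) (Fin m)).reindex finProdFinEquiv
  refine Nat.sInf_mem (s := {R | ∃ A : Fin R → Matrix (Fin n) (Fin m) F,
    (∀ i, (A i).rank = 1) ∧ C ≤ span F (Set.range A)}) ⟨n * m, b, fun i => ?_, b.span_eq ▸ le_top⟩
  simp [b, stdBasis_eq_single, rank_single_one]

theorem genTensorRank_le_finrank_span {S : Set (Matrix (Fin n) (Fin m) F)}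
    (hS : ∀ M ∈ S, M.rank = 1) {r : ℕ} (hr : r ≤ finrank F ↥(C ⊓ span F S)) :
    genTensorRank C r ≤ finrank F (span F S) :=
  Nat.sInf_le ⟨_, ⟨S, hS, rfl⟩, hr, rfl⟩

theorem exists_finrank_span_eq_genTensorRank {S : Set (Matrix (Fin n) (Fin m) F)}
    (hS : ∀ M ∈ S, M.rank = 1) {r : ℕ} (hr : r ≤ finrank F ↥(C ⊓ span F S)) :
    ∃ S' : Set (Matrix (Fin n) (Fin m) F), (∀ M ∈ S', M.rank = 1) ∧
      r ≤ finrank F ↥(C ⊓ span F S') ∧ finrank F (span F S') = genTensorRank C r := by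
  obtain ⟨U, ⟨S', hS', rfl⟩, hr', hdim⟩ :=
    Nat.sInf_mem (s := {s | ∃ U : Submodule F (Matrix (Fin n) (Fin m) F),
      (∃ S : Set (Matrix (Fin n) (Fin m) F), (∀ M ∈ S, M.rank = 1) ∧ U = span F S) ∧
      r ≤ finrank F ↥(C ⊓ U) ∧ finrank F U = s}) ⟨_, ⟨_, ⟨S, hS, rfl⟩, hr, rfl⟩⟩
  exact ⟨S', hS', hr', hdim⟩

theorem minRankDist_add_le_finrank_span {S : Set (Matrix (Fin n) (Fin m) F)}
    (hS : ∀ M ∈ S, M.rank = 1) {r : ℕ} (hr : 1 ≤ r) (hCS : r ≤ finrank F ↥(C ⊓ span F S)) :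
    minRankDist C + r ≤ finrank F (span F S) + 1 := by
  classical
  obtain ⟨B, hBS, hBspan, hBli⟩ := exists_linearIndependent F S
  have := hBli.setFinite.fintype
  have hBspan' : span F (B.toFinset : Set (Matrix (Fin n) (Fin m) F)) = span F S := by
    rwa [Set.coe_toFinset]
  have hBcard : B.toFinset.card = finrank F (span F S) := by
    rw [← hBspan', finrank_span_finset_eq_card (by rwa [Set.coe_toFinset])]
  have hrB : r - 1 ≤ B.toFinset.card := by
    have := finrank_mono (inf_le_right : C ⊓ span F S ≤ span F S)
    omega
  obtain ⟨T, hTB, hTcard, hT⟩ :=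
    exists_subset_finrank_le_finrank_inf_span_add (hBspan'.symm ▸ inf_le_right : C ⊓ span F S ≤ _) hrB
  obtain ⟨⟨x, hx⟩, hx0⟩ := finrank_pos_iff_exists_ne_zero.1
    (show 0 < finrank F ↥(C ⊓ span F S ⊓ span F (T : Set (Matrix (Fin n) (Fin m) F))) by omega)
  have hdx := minRankDist_le_rank (mem_inf.1 (mem_inf.1 hx).1).1 (by simpa using hx0)
  have hxT := rank_le_card_of_mem_span_finset
    (fun A hA => (hS A (hBS (Set.mem_toFinset.1 (hTB hA)))).le) (mem_inf.1 hx).2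
  omega

theorem exists_rankOne_span_finrank_le_trkCode {r : ℕ} (hr : r ≤ finrank F C) :
    ∃ S : Set (Matrix (Fin n) (Fin m) F), (∀ M ∈ S, M.rank = 1) ∧
      r ≤ finrank F ↥(C ⊓ span F S) ∧ finrank F (span F S) + finrank F C ≤ trkCode C + r := by
  classical
  obtain ⟨A, hA1, hCA⟩ := trkCode_spec C
  have hSspan : span F ((Finset.univ.image A : Finset _) : Set (Matrix (Fin n) (Fin m) F)) =
      span F (Set.range A) := by
    simp
  have hCS := hSspan ▸ hCA
  have hkS : finrank F C ≤ (Finset.univ.image A).card :=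
    (finrank_mono hCS).trans (finrank_span_finset_le_card _)
  have hSR : (Finset.univ.image A).card ≤ trkCode C := Finset.card_image_le.trans (by simp)
  obtain ⟨T, hTS, hTcard, hT⟩ :=
    exists_subset_finrank_le_finrank_inf_span_add hCS (show finrank F C - r ≤ _ by omega)
  refine ⟨T, fun M hM => ?_, by omega, ?_⟩
  · obtain ⟨i, -, rfl⟩ := Finset.mem_image.1 (hTS hM)
    exact hA1 i
  · have : finrank F (span F (T : Set (Matrix (Fin n) (Fin m) F))) ≤ T.card :=
      finrank_span_finset_le_card T
    omega

end RankMetricCode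

theorem genTensorRank_bounds_general {F : Type*} [Field F] {n m : ℕ}
    (C : Submodule F (Matrix (Fin n) (Fin m) F)) :
    ∀ r : ℕ, 1 ≤ r → r ≤ Module.finrank F C →
      minRankDist C + r - 1 ≤ genTensorRank C r ∧
      genTensorRank C r ≤ trkCode C - Module.finrank F C + r := by
  intro r hr1 hrk
  obtain ⟨S, hS, hrS, hdimS⟩ := exists_rankOne_span_finrank_le_trkCode hrk
  obtain ⟨S', hS', hrS', hdimS'⟩ := exists_finrank_span_eq_genTensorRank hS hrS
  have hlower := minRankDist_add_le_finrank_span hS' hr1 hrS'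
  have hupper := genTensorRank_le_finrank_span hS hrS
  omega

/-- Bounds on the generalized tensor ranks of a rank-metric code of dimension `k ≥ 1`:
`d(C) + r - 1 ≤ d_r(C) ≤ trk(C) - k + r` for `1 ≤ r ≤ k`. -/
theorem genTensorRank_bounds {F : Type*} [Field F] [Fintype F] {n m : ℕ}
    (C : Submodule F (Matrix (Fin n) (Fin m) F)) (hk : 1 ≤ Module.finrank F C) :
    ∀ r : ℕ, 1 ≤ r → r ≤ Module.finrank F C →
      minRankDist C + r - 1 ≤ genTensorRank C r ∧
      genTensorRank C r ≤ trkCode C - Module.finrank F C + r :=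
  genTensorRank_bounds_general C
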